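/- arXiv:1012.2898 — 2 statements merged into one kernel-verified Lean document; each statement's English description precedes it below -/
import Mathlib

section
/- Let 𝔊 be a self-adjoint Lie subalgebra of M(n,ℝ). Let Z(𝔊) denote the center of 𝔊 and let 𝔊₀ denote the orthogonal complement of Z(𝔊) in 𝔊 relative to the canonical inner product. Then: (1) 𝔊 = Z(𝔊) ⊕ 𝔊₀; (2) Z(𝔊) and 𝔊₀ are self-adjoint ideals of 𝔊; (3) 𝔊₀ is semisimple. -/
open Matrix Filter Topology

noncomputable section

attribute [instance 100] LieRing.ofAssociativeRing

/-- The space M(n,ℝ) of n × n real matrices. -/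
abbrev Mat (n : ℕ) := Matrix (Fin n) (Fin n) ℝ

/-- ℝⁿ with its standard (Euclidean) inner product. -/
abbrev Euc (n : ℕ) := EuclideanSpace ℝ (Fin n)

/-- The action of a matrix on Euclidean space. -/
def act {n : ℕ} (X : Mat n) (v : Euc n) : Euc n := Matrix.toEuclideanLin X v

/-- The matrix exponential. -/
def mexp {n : ℕ} (X : Mat n) : Mat n := NormedSpace.exp X

/-- The canonical inner product ⟨A,B⟩ = trace (A Bᵀ) on M(n,ℝ). -/
def minner {n : ℕ} (A B : Mat n) : ℝ := Matrix.trace (A * Bᵀ)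

/-- The norm associated to the canonical inner product on M(n,ℝ). -/
def mnorm {n : ℕ} (A : Mat n) : ℝ := Real.sqrt (minner A A)

/-- The Lie algebra 𝔊 of a subgroup G of GL(n,ℝ):
𝔊 = {X ∈ M(n,ℝ) : exp(tX) ∈ G for all t ∈ ℝ}. -/
def lieAlgOf {n : ℕ} (G : Subgroup (GL (Fin n) ℝ)) : Set (Mat n) :=
  {X | ∀ t : ℝ, ∃ g ∈ G, (g : Mat n) = mexp (t • X)}

/-- G is self-adjoint: gᵀ ∈ G whenever g ∈ G. -/
def IsSelfAdjointSubgroup {n : ℕ} (G : Subgroup (GL (Fin n) ℝ)) : Prop :=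
  ∀ g ∈ G, ∃ h ∈ G, (h : Mat n) = (g : Mat n)ᵀ

/-- 𝔎 : the set of skew-symmetric elements of the Lie algebra of G. -/
def kSet {n : ℕ} (G : Subgroup (GL (Fin n) ℝ)) : Set (Mat n) :=
  {X ∈ lieAlgOf G | Xᵀ = -X}

/-- 𝔊_v : the stabilizer subalgebra {X ∈ 𝔊 : X(v) = 0}. -/
def stabAlg {n : ℕ} (G : Subgroup (GL (Fin n) ℝ)) (v : Euc n) : Set (Mat n) :=
  {X ∈ lieAlgOf G | act X v = 0}

/-- 𝔓̃_v : the orthogonal complement of 𝔎 + 𝔊_v in 𝔊 w.r.t. the canonical inner product. -/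
def tildeP {n : ℕ} (G : Subgroup (GL (Fin n) ℝ)) (v : Euc n) : Set (Mat n) :=
  {X ∈ lieAlgOf G | ∀ Y : Mat n, (Y ∈ kSet G ∨ Y ∈ stabAlg G v) → minner X Y = 0}

/-- `v` has a nonzero component in the μ-eigenspace of X. -/
def hasComp {n : ℕ} (X : Mat n) (v : Euc n) (μ : ℝ) : Prop :=
  Submodule.orthogonalProjectionOnto (Module.End.eigenspace (Matrix.toEuclideanLin X) μ) v ≠ 0

/-- λ_X(v) : the largest eigenvalue μ of X such that v has a nonzero component
in the μ-eigenspace of X. -/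
def lambdaOf {n : ℕ} (X : Mat n) (v : Euc n) : ℝ := sSup {μ : ℝ | hasComp X v μ}

/-- μ_X(v) : the smallest eigenvalue μ of X such that v has a nonzero component
in the μ-eigenspace of X. -/
def muOf {n : ℕ} (X : Mat n) (v : Euc n) : ℝ := sInf {μ : ℝ | hasComp X v μ}

/-- λ⁻(v) = inf {λ_X(v) : X ∈ 𝔓̃_v, |X| = 1}. -/
def lamMinus {n : ℕ} (G : Subgroup (GL (Fin n) ℝ)) (v : Euc n) : ℝ :=
  sInf {r : ℝ | ∃ X ∈ tildeP G v, mnorm X = 1 ∧ r = lambdaOf X v}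

/-- λ⁺(v) = sup {λ_X(v) : X ∈ 𝔓̃_v, |X| = 1}. -/
def lamPlus {n : ℕ} (G : Subgroup (GL (Fin n) ℝ)) (v : Euc n) : ℝ :=
  sSup {r : ℝ | ∃ X ∈ tildeP G v, mnorm X = 1 ∧ r = lambdaOf X v}

/-- The orbit G(v). -/
def orbitOf {n : ℕ} (G : Subgroup (GL (Fin n) ℝ)) (v : Euc n) : Set (Euc n) :=
  {w | ∃ g ∈ G, w = act (g : Mat n) v}

/-- v is a minimal vector for G : |g(v)| ≥ |v| for all g ∈ G. -/
def IsMinimalVec {n : ℕ} (G : Subgroup (GL (Fin n) ℝ)) (v : Euc n) : Prop :=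
  ∀ g ∈ G, ‖v‖ ≤ ‖act (g : Mat n) v‖

/-!
The canonical inner product is positive definite and `ad Xᵀ` is the adjoint of `ad X`. Hence
`Z(𝔊)` and its orthogonal complement `𝔊₀` are transpose-stable, and `𝔊₀` is an ideal since
`⟨[X,W],V⟩ = ⟨W,[Xᵀ,V]⟩ = 0` for central `V`. If `x ∈ 𝔊₀` is in the radical of the Killing form
of `𝔊₀`, then `0 = B(xᵀ, x) = tr((ad x)* ∘ ad x)`, so `ad x` vanishes on `𝔊₀`; since `x` also
commutes with `Z(𝔊)` and `𝔊 = Z(𝔊) + 𝔊₀`, it is central, so `x ∈ Z(𝔊) ∩ 𝔊₀ = 0`.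
-/

theorem Submodule.existsUnique_add_of_disjoint {R M : Type*} [Ring R] [AddCommGroup M]
    [Module R M] {p q : Submodule R M} (hpq : Disjoint p q) {x : M} (hx : x ∈ p ⊔ q) :
    ∃! u : M × M, u.1 ∈ p ∧ u.2 ∈ q ∧ x = u.1 + u.2 := by
  obtain ⟨a, ha, b, hb, rfl⟩ := Submodule.mem_sup.mp hx
  refine ⟨(a, b), ⟨ha, hb, rfl⟩, fun ⟨c, d⟩ ⟨hc, hd, hsum⟩ => ?_⟩
  have hca : c - a = b - d := by rw [sub_eq_sub_iff_add_eq_add, ← hsum, add_comm]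
  have hca0 : c - a = 0 :=
    Submodule.disjoint_def.mp hpq _ (sub_mem hc ha) (hca ▸ sub_mem hb hd)
  rw [hca0, eq_comm, sub_eq_zero] at hca
  exact Prod.ext (sub_eq_zero.mp hca0) hca.symm

theorem LinearMap.eq_zero_of_trace_adjoint_comp_self_eq_zero {𝕜 E : Type*} [RCLike 𝕜]
    [NormedAddCommGroup E] [InnerProductSpace 𝕜 E] [FiniteDimensional 𝕜 E]
    {T : E →ₗ[𝕜] E} (hT : (T.adjoint ∘ₗ T).trace 𝕜 E = 0) : T = 0 := by
  let b := stdOrthonormalBasis 𝕜 E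
  have hsum : ∑ i, ‖T (b i)‖ ^ 2 = 0 := by
    rw [LinearMap.trace_eq_sum_inner _ b] at hT
    simp only [LinearMap.comp_apply, LinearMap.adjoint_inner_right,
      inner_self_eq_norm_sq_to_K] at hT
    exact_mod_cast hT
  refine b.toBasis.ext fun i => ?_
  have := (Finset.sum_eq_zero_iff_of_nonneg fun i _ => sq_nonneg ‖T (b i)‖).mp hsum i
    (Finset.mem_univ i)
  simpa [b.coe_toBasis] using this

section Frobenius

open scoped InnerProductSpace

variable {n : ℕ}

theorem minner_comm (A B : Mat n) : minner A B = minner B A := by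
  rw [minner, minner, ← trace_transpose, transpose_mul, transpose_transpose]

theorem minner_add_left (A B C : Mat n) : minner (A + B) C = minner A C + minner B C := by
  simp [minner, add_mul]

theorem minner_smul_left (r : ℝ) (A B : Mat n) : minner (r • A) B = r * minner A B := by
  simp [minner]

theorem minner_self_nonneg (A : Mat n) : 0 ≤ minner A A := by
  simpa [minner] using (posSemidef_self_mul_conjTranspose A).trace_nonneg

theorem minner_self_eq_zero {A : Mat n} : minner A A = 0 ↔ A = 0 := by
  simpa [minner] using trace_mul_conjTranspose_self_eq_zero_iff (A := A)

theorem minner_transpose_left (A B : Mat n) : minner Aᵀ B = minner A Bᵀ := by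
  rw [minner, minner, transpose_transpose, ← transpose_mul, trace_transpose, trace_mul_comm]

theorem minner_lie_left (X A B : Mat n) : minner ⁅X, A⁆ B = minner A ⁅Xᵀ, B⁆ := by
  simp only [minner, Ring.lie_def, transpose_sub, transpose_mul, transpose_transpose, sub_mul,
    mul_sub, trace_sub]
  rw [← Matrix.mul_assoc, ← Matrix.mul_assoc, trace_mul_cycle A Bᵀ X]

@[reducible]
def frobeniusCore (S : LieSubalgebra ℝ (Mat n)) : InnerProductSpace.Core ℝ S where
  inner x y := minner (x : Mat n) y
  conj_inner_symm x y := minner_comm (y : Mat n) x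
  re_inner_nonneg x := minner_self_nonneg (x : Mat n)
  add_left x y z := minner_add_left (x : Mat n) y z
  smul_left x y r := minner_smul_left r (x : Mat n) y
  definite _ h := Subtype.ext (minner_self_eq_zero.mp h)

instance (S : LieSubalgebra ℝ (Mat n)) : NormedAddCommGroup S :=
  (frobeniusCore S).toNormedAddCommGroup

instance (S : LieSubalgebra ℝ (Mat n)) : InnerProductSpace ℝ S :=
  .ofCore (frobeniusCore S).toCore

theorem LieSubalgebra.inner_eq_minner {S : LieSubalgebra ℝ (Mat n)} (x y : S) :
    ⟪x, y⟫_ℝ = minner (x : Mat n) y :=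
  rfl

theorem LieSubalgebra.ad_transpose_eq_adjoint {H : LieSubalgebra ℝ (Mat n)}
    (hH : ∀ X ∈ H, Xᵀ ∈ H) (x : H) :
    LieAlgebra.ad ℝ H ⟨(x : Mat n)ᵀ, hH x x.2⟩ = (LieAlgebra.ad ℝ H x).adjoint := by
  rw [LinearMap.eq_adjoint_iff]
  intro u v
  simp only [inner_eq_minner, LieAlgebra.ad_apply, LieSubalgebra.coe_bracket]
  rw [minner_lie_left, transpose_transpose]

theorem LieSubalgebra.ad_eq_zero_of_killingForm_transpose_self_eq_zero
    {H : LieSubalgebra ℝ (Mat n)} (hH : ∀ X ∈ H, Xᵀ ∈ H) {x : H}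
    (hx : killingForm ℝ H ⟨(x : Mat n)ᵀ, hH x x.2⟩ x = 0) : LieAlgebra.ad ℝ H x = 0 := by
  rw [killingForm_apply_apply, ad_transpose_eq_adjoint] at hx
  exact LinearMap.eq_zero_of_trace_adjoint_comp_self_eq_zero hx

end Frobenius

namespace LieSubalgebra

variable {n : ℕ} (𝔊 : LieSubalgebra ℝ (Mat n))

def matrixCenter : Submodule ℝ (Mat n) where
  carrier := {X | X ∈ 𝔊 ∧ ∀ Y ∈ 𝔊, ⁅X, Y⁆ = 0}
  add_mem' {A B} hA hB := ⟨add_mem hA.1 hB.1, fun Y hY => by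
    rw [add_lie, hA.2 Y hY, hB.2 Y hY, add_zero]⟩
  zero_mem' := ⟨zero_mem 𝔊, fun Y _ => zero_lie Y⟩
  smul_mem' r A hA := ⟨𝔊.smul_mem r hA.1, fun Y hY => by rw [smul_lie, hA.2 Y hY, smul_zero]⟩

def centerOrthogonal : Submodule ℝ (Mat n) where
  carrier := {X | X ∈ 𝔊 ∧ ∀ W ∈ 𝔊.matrixCenter, minner X W = 0}
  add_mem' {A B} hA hB := ⟨add_mem hA.1 hB.1, fun W hW => by
    rw [minner_add_left, hA.2 W hW, hB.2 W hW, add_zero]⟩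
  zero_mem' := ⟨zero_mem 𝔊, fun W _ => by simp [minner]⟩
  smul_mem' r A hA := ⟨𝔊.smul_mem r hA.1, fun W hW => by
    rw [minner_smul_left, hA.2 W hW, mul_zero]⟩

variable {𝔊}

theorem disjoint_matrixCenter_centerOrthogonal :
    Disjoint 𝔊.matrixCenter 𝔊.centerOrthogonal :=
  Submodule.disjoint_def.mpr fun _ hZ hG₀ => minner_self_eq_zero.mp (hG₀.2 _ hZ)

theorem le_matrixCenter_sup_centerOrthogonal :
    𝔊.toSubmodule ≤ 𝔊.matrixCenter ⊔ 𝔊.centerOrthogonal := by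
  intro X hX
  let K : Submodule ℝ 𝔊 := 𝔊.matrixCenter.comap (𝔊.incl : 𝔊 →ₗ[ℝ] Mat n)
  obtain ⟨y, hy, z, hz, hyz⟩ := K.exists_add_mem_mem_orthogonal ⟨X, hX⟩
  refine Submodule.mem_sup.mpr ⟨y, hy, z, ⟨z.2, fun W hW => ?_⟩, congrArg Subtype.val hyz.symm⟩
  rw [minner_comm]
  exact hz ⟨W, hW.1⟩ hW

theorem lie_eq_zero_of_mem_matrixCenter {X W : Mat n} (hX : X ∈ 𝔊) (hW : W ∈ 𝔊.matrixCenter) :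
    ⁅X, W⁆ = 0 := by
  rw [← lie_skew, hW.2 X hX, neg_zero]

theorem lie_mem_matrixCenter {X W : Mat n} (hX : X ∈ 𝔊) (hW : W ∈ 𝔊.matrixCenter) :
    ⁅X, W⁆ ∈ 𝔊.matrixCenter := by
  rw [lie_eq_zero_of_mem_matrixCenter hX hW]
  exact zero_mem _

theorem transpose_mem_matrixCenter (hsa : ∀ X ∈ 𝔊, Xᵀ ∈ 𝔊) {X : Mat n}
    (hX : X ∈ 𝔊.matrixCenter) : Xᵀ ∈ 𝔊.matrixCenter := by
  refine ⟨hsa X hX.1, fun Y hY => ?_⟩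
  rw [← transpose_transpose Y, ← lie_transpose,
    lie_eq_zero_of_mem_matrixCenter (hsa Y hY) hX, transpose_zero]

theorem transpose_mem_centerOrthogonal (hsa : ∀ X ∈ 𝔊, Xᵀ ∈ 𝔊) {X : Mat n}
    (hX : X ∈ 𝔊.centerOrthogonal) : Xᵀ ∈ 𝔊.centerOrthogonal := by
  refine ⟨hsa X hX.1, fun W hW => ?_⟩
  rw [minner_transpose_left]
  exact hX.2 _ (transpose_mem_matrixCenter hsa hW)

theorem lie_mem_centerOrthogonal (hsa : ∀ X ∈ 𝔊, Xᵀ ∈ 𝔊) {X W : Mat n} (hX : X ∈ 𝔊)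
    (hW : W ∈ 𝔊.centerOrthogonal) : ⁅X, W⁆ ∈ 𝔊.centerOrthogonal := by
  refine ⟨𝔊.lie_mem hX hW.1, fun V hV => ?_⟩
  rw [minner_lie_left, lie_eq_zero_of_mem_matrixCenter (hsa X hX) hV]
  simp [minner]

theorem mem_matrixCenter_of_lie_centerOrthogonal_eq_zero {X : Mat n} (hX : X ∈ 𝔊)
    (hcomm : ∀ Y ∈ 𝔊.centerOrthogonal, ⁅X, Y⁆ = 0) : X ∈ 𝔊.matrixCenter := by
  refine ⟨hX, fun Y hY => ?_⟩
  obtain ⟨A, hA, B, hB, rfl⟩ := Submodule.mem_sup.mp (le_matrixCenter_sup_centerOrthogonal hY)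
  rw [lie_add, lie_eq_zero_of_mem_matrixCenter hX hA, hcomm B hB, add_zero]

theorem killingForm_nondegenerate_of_coe_eq_centerOrthogonal (hsa : ∀ X ∈ 𝔊, Xᵀ ∈ 𝔊)
    (H : LieSubalgebra ℝ (Mat n)) (hH : (H : Set (Mat n)) = 𝔊.centerOrthogonal) :
    (killingForm ℝ H).Nondegenerate := by
  have hHsa (X : Mat n) (hX : X ∈ H) : Xᵀ ∈ H := by
    rw [← SetLike.mem_coe, hH] at hX ⊢
    exact transpose_mem_centerOrthogonal hsa hX
  refine LinearMap.BilinForm.Nondegenerate.ofSeparatingLeft fun x hx => ?_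
  have hxG₀ : (x : Mat n) ∈ 𝔊.centerOrthogonal := by rw [← SetLike.mem_coe, ← hH]; exact x.2
  have had : LieAlgebra.ad ℝ H x = 0 :=
    ad_eq_zero_of_killingForm_transpose_self_eq_zero hHsa <| by
      rw [LieModule.traceForm_comm]
      exact hx _
  have hxZ : (x : Mat n) ∈ 𝔊.matrixCenter := by
    refine mem_matrixCenter_of_lie_centerOrthogonal_eq_zero hxG₀.1 fun Y hY => ?_
    have hYH : Y ∈ H := by rw [← SetLike.mem_coe, hH]; exact hY
    simpa using congrArg Subtype.val (LinearMap.congr_fun had ⟨Y, hYH⟩)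
  exact Subtype.ext (Submodule.disjoint_def.mp disjoint_matrixCenter_centerOrthogonal _ hxZ hxG₀)

end LieSubalgebra

open LieSubalgebra in
/-- Let 𝔊 be a self-adjoint Lie subalgebra of M(n,ℝ), Z(𝔊) its center and
𝔊₀ the orthogonal complement of Z(𝔊) in 𝔊 w.r.t. the canonical inner product. Then
(1) 𝔊 = Z(𝔊) ⊕ 𝔊₀, (2) Z(𝔊) and 𝔊₀ are self-adjoint ideals of 𝔊, and (3) 𝔊₀ is
semisimple (its Killing form is nondegenerate). -/
theorem stmt0 {n : ℕ} (𝔊 : LieSubalgebra ℝ (Mat n))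
    (hsa : ∀ X ∈ 𝔊, Xᵀ ∈ 𝔊)
    (Z G₀ : Set (Mat n))
    (hZ : Z = {X : Mat n | X ∈ 𝔊 ∧ ∀ Y ∈ 𝔊, ⁅X, Y⁆ = 0})
    (hG₀ : G₀ = {X : Mat n | X ∈ 𝔊 ∧ ∀ W ∈ Z, minner X W = 0}) :
    (∀ X ∈ 𝔊, ∃! p : Mat n × Mat n, p.1 ∈ Z ∧ p.2 ∈ G₀ ∧ X = p.1 + p.2)
    ∧ ((∀ X ∈ Z, Xᵀ ∈ Z) ∧ (∀ X ∈ G₀, Xᵀ ∈ G₀)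
        ∧ (∀ X ∈ 𝔊, ∀ W ∈ Z, ⁅X, W⁆ ∈ Z) ∧ (∀ X ∈ 𝔊, ∀ W ∈ G₀, ⁅X, W⁆ ∈ G₀))
    ∧ (∀ H : LieSubalgebra ℝ (Mat n), (H : Set (Mat n)) = G₀ →
        (killingForm ℝ H).Nondegenerate) := by
  obtain rfl : Z = 𝔊.matrixCenter := hZ
  obtain rfl : G₀ = 𝔊.centerOrthogonal := hG₀
  exact ⟨fun X hX => Submodule.existsUnique_add_of_disjoint
      disjoint_matrixCenter_centerOrthogonal (le_matrixCenter_sup_centerOrthogonal hX),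
    ⟨fun _ => transpose_mem_matrixCenter hsa, fun _ => transpose_mem_centerOrthogonal hsa,
      fun _ hX _ => lie_mem_matrixCenter hX, fun _ hX _ => lie_mem_centerOrthogonal hsa hX⟩,
    killingForm_nondegenerate_of_coe_eq_centerOrthogonal hsa⟩

end
end

section
/- Let G be a closed, connected, self-adjoint, noncompact subgroup of GL(n,ℝ) and let v ∈ ℝⁿ be nonzero. Then λ⁻(v) = λ⁻(k(v)) for every k ∈ K = G ∩ O(n,ℝ). -/
open Matrix Filter Topology

noncomputable section

/-!
For `k ∈ G` with `k⁻¹ = kᵀ`, conjugation `X ↦ k X kᵀ` preserves the canonical inner product on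
`M(n,ℝ)` and the Lie algebra `𝔊`, hence maps `𝔎` onto `𝔎`, `𝔊_v` onto `𝔊_{k v}` and so `𝔓̃_v`
onto `𝔓̃_{k v}`, keeping `|X|` fixed. Since `k` is an isometry of `ℝⁿ` carrying the eigenspaces of
`X` onto those of `k X kᵀ`, the vector `k v` has a nonzero component in the `μ`-eigenspace of
`k X kᵀ` exactly when `v` has one in that of `X`, so `λ_{k X kᵀ}(k v) = λ_X(v)`. Hence the sets
whose infima are `λ⁻(v)` and `λ⁻(k v)` coincide.
-/

theorem Module.End.eigenspace_conj {R M M' : Type*} [CommRing R] [AddCommGroup M]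
    [AddCommGroup M'] [Module R M] [Module R M'] (e : M ≃ₗ[R] M') (f : Module.End R M) (μ : R) :
    (e.conj f).eigenspace μ = (f.eigenspace μ).map (e : M →ₗ[R] M') := by
  ext x
  rw [Submodule.mem_map_equiv, Module.End.mem_eigenspace_iff, Module.End.mem_eigenspace_iff,
    LinearEquiv.conj_apply_apply, ← e.symm.map_smul, e.symm.injective.eq_iff.symm,
    e.symm_apply_apply]

theorem LinearIsometryEquiv.starProjection_map_apply_eq_zero_iff {𝕜 E E' : Type*} [RCLike 𝕜]
    [NormedAddCommGroup E] [NormedAddCommGroup E'] [InnerProductSpace 𝕜 E]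
    [InnerProductSpace 𝕜 E'] (e : E ≃ₗᵢ[𝕜] E') (p : Submodule 𝕜 E) [p.HasOrthogonalProjection]
    (x : E) :
    (p.map (e.toLinearEquiv : E →ₗ[𝕜] E')).starProjection (e x) = 0 ↔ p.starProjection x = 0 := by
  rw [Submodule.starProjection_map_apply, e.symm_apply_apply, e.map_eq_zero_iff]

section Orthogonal

variable {n : ℕ} {A : Mat n}

theorem act_mul (A B : Mat n) (v : Euc n) : act (A * B) v = act A (act B v) := by
  simp [act]

theorem act_one (v : Euc n) : act (1 : Mat n) v = v := by
  simp [act]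

theorem act_transpose_act (hA : Aᵀ * A = 1) (v : Euc n) : act Aᵀ (act A v) = v := by
  rw [← act_mul, hA, act_one]

theorem act_act_transpose (hA : Aᵀ * A = 1) (v : Euc n) : act A (act Aᵀ v) = v := by
  rw [← act_mul, mul_eq_one_comm.mp hA, act_one]

theorem inner_act_act (hA : Aᵀ * A = 1) (x y : Euc n) :
    inner ℝ (act A x) (act A y) = inner ℝ x y := by
  rw [act, ← LinearMap.adjoint_inner_right, ← Matrix.toEuclideanLin_conjTranspose_eq_adjoint,
    Matrix.conjTranspose_eq_transpose_of_trivial]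
  exact congrArg (inner ℝ x) (act_transpose_act hA y)

def orthogonalIsometry (A : Mat n) (hA : Aᵀ * A = 1) : Euc n ≃ₗᵢ[ℝ] Euc n :=
  LinearEquiv.isometryOfInner
    (LinearEquiv.ofLinearMap (f := Matrix.toEuclideanLin A) (g := Matrix.toEuclideanLin Aᵀ)
      (LinearMap.ext (act_act_transpose hA)) (LinearMap.ext (act_transpose_act hA)))
    (inner_act_act hA)

theorem orthogonalIsometry_apply (hA : Aᵀ * A = 1) (v : Euc n) :
    orthogonalIsometry A hA v = act A v := rfl

theorem toEuclideanLin_conj (hA : Aᵀ * A = 1) (X : Mat n) :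
    Matrix.toEuclideanLin (A * X * Aᵀ) =
      (orthogonalIsometry A hA).toLinearEquiv.conj (Matrix.toEuclideanLin X) := by
  ext1 v
  exact (act_mul _ _ v).trans (act_mul _ _ _)

theorem hasComp_conj (hA : Aᵀ * A = 1) (X : Mat n) (v : Euc n) (μ : ℝ) :
    hasComp (A * X * Aᵀ) (act A v) μ ↔ hasComp X v μ := by
  simp only [hasComp, ne_eq, ← Submodule.coe_eq_zero, ← Submodule.starProjection_apply]
  simp only [toEuclideanLin_conj hA, Module.End.eigenspace_conj]
  rw [← orthogonalIsometry_apply hA, LinearIsometryEquiv.starProjection_map_apply_eq_zero_iff]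

theorem lambdaOf_conj (hA : Aᵀ * A = 1) (X : Mat n) (v : Euc n) :
    lambdaOf (A * X * Aᵀ) (act A v) = lambdaOf X v := by
  simp only [lambdaOf, hasComp_conj hA]

theorem minner_conj (A X Y : Mat n) : minner (A * X * Aᵀ) Y = minner X (Aᵀ * Y * A) := by
  rw [minner, minner, Matrix.transpose_mul, Matrix.transpose_mul, Matrix.transpose_transpose,
    mul_assoc A, mul_assoc A, Matrix.trace_mul_comm A]
  simp only [mul_assoc]

theorem mnorm_conj (hA : Aᵀ * A = 1) (X : Mat n) : mnorm (A * X * Aᵀ) = mnorm X := by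
  rw [mnorm, mnorm, minner_conj, ← mul_assoc, ← mul_assoc, hA, one_mul, mul_assoc, hA, mul_one]

end Orthogonal

section Conjugation

variable {n : ℕ} {G : Subgroup (GL (Fin n) ℝ)} {k : GL (Fin n) ℝ}

theorem act_inv_act (k : GL (Fin n) ℝ) (v : Euc n) :
    act (↑k⁻¹ : Mat n) (act (k : Mat n) v) = v := by
  rw [← act_mul, ← Units.val_mul, inv_mul_cancel, Units.val_one, act_one]

theorem conj_mem_lieAlgOf (hk : k ∈ G) {X : Mat n} (hX : X ∈ lieAlgOf G) :
    (k : Mat n) * X * (↑k⁻¹ : Mat n) ∈ lieAlgOf G := by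
  intro t
  obtain ⟨g, hg, hgX⟩ := hX t
  refine ⟨k * g * k⁻¹, mul_mem (mul_mem hk hg) (inv_mem hk), ?_⟩
  rw [mexp, ← Matrix.smul_mul, ← Matrix.mul_smul, Matrix.exp_units_conj, Units.val_mul,
    Units.val_mul, hgX, mexp]

theorem conj_mem_stabAlg (hk : k ∈ G) {v : Euc n} {Y : Mat n} (hY : Y ∈ stabAlg G v) :
    (k : Mat n) * Y * (↑k⁻¹ : Mat n) ∈ stabAlg G (act (k : Mat n) v) := by
  refine ⟨conj_mem_lieAlgOf hk hY.1, ?_⟩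
  rw [act_mul, act_mul, act_inv_act, hY.2, act, map_zero]

theorem conj_mem_kSet (hk : k ∈ G) (hkT : (↑k⁻¹ : Mat n) = (k : Mat n)ᵀ)
    {Y : Mat n} (hY : Y ∈ kSet G) : (k : Mat n) * Y * (↑k⁻¹ : Mat n) ∈ kSet G := by
  refine ⟨conj_mem_lieAlgOf hk hY.1, ?_⟩
  rw [hkT, Matrix.transpose_mul, Matrix.transpose_mul, Matrix.transpose_transpose, hY.2,
    Matrix.neg_mul, Matrix.mul_neg, mul_assoc]

theorem coe_inv_inv_eq_transpose (hkT : (↑k⁻¹ : Mat n) = (k : Mat n)ᵀ) :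
    (↑k⁻¹⁻¹ : Mat n) = (↑k⁻¹ : Mat n)ᵀ := by
  rw [inv_inv, hkT, Matrix.transpose_transpose]

theorem conj_mem_tildeP (hk : k ∈ G) (hkT : (↑k⁻¹ : Mat n) = (k : Mat n)ᵀ)
    {v : Euc n} {X : Mat n} (hX : X ∈ tildeP G v) :
    (k : Mat n) * X * (↑k⁻¹ : Mat n) ∈ tildeP G (act (k : Mat n) v) := by
  refine ⟨conj_mem_lieAlgOf hk hX.1, fun Y hY => ?_⟩
  -- `Y` is orthogonal to `k X k⁻¹` iff `k⁻¹ Y k` is orthogonal to `X`, and conjugation by `k⁻¹`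
  -- carries `𝔎` and `𝔊_{k v}` back to `𝔎` and `𝔊_v`.
  have hkT' := coe_inv_inv_eq_transpose hkT
  rw [hkT, minner_conj]
  apply hX.2
  rcases hY with hY | hY
  · simpa only [← hkT, ← hkT', inv_inv] using Or.inl (conj_mem_kSet (inv_mem hk) hkT' hY)
  · simpa only [← hkT, ← hkT', inv_inv, act_inv_act] using
      Or.inr (conj_mem_stabAlg (inv_mem hk) hY)

def unitLambdaSet (G : Subgroup (GL (Fin n) ℝ)) (v : Euc n) : Set ℝ :=
  {r | ∃ X ∈ tildeP G v, mnorm X = 1 ∧ r = lambdaOf X v}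

theorem unitLambdaSet_subset_act (hk : k ∈ G)
    (hkT : (↑k⁻¹ : Mat n) = (k : Mat n)ᵀ) (v : Euc n) :
    unitLambdaSet G v ⊆ unitLambdaSet G (act (k : Mat n) v) := by
  rintro r ⟨X, hXP, hXnorm, rfl⟩
  have hkO : (k : Mat n)ᵀ * k = 1 := by rw [← hkT, Units.inv_mul]
  refine ⟨k * X * (↑k⁻¹ : Mat n), conj_mem_tildeP hk hkT hXP, ?_, ?_⟩
  · rw [hkT, mnorm_conj hkO, hXnorm]
  · rw [hkT, lambdaOf_conj hkO]

theorem unitLambdaSet_act (hk : k ∈ G)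
    (hkT : (↑k⁻¹ : Mat n) = (k : Mat n)ᵀ) (v : Euc n) :
    unitLambdaSet G (act (k : Mat n) v) = unitLambdaSet G v := by
  refine subset_antisymm ?_ (unitLambdaSet_subset_act hk hkT v)
  simpa only [act_inv_act] using
    unitLambdaSet_subset_act (inv_mem hk) (coe_inv_inv_eq_transpose hkT) (act (k : Mat n) v)

end Conjugation

theorem stmt9_general {n : ℕ} (G : Subgroup (GL (Fin n) ℝ))
    (v : Euc n)
    (k : GL (Fin n) ℝ) (hk : k ∈ G)
    (hkO : ((k : GL (Fin n) ℝ) : Mat n)ᵀ * ((k : GL (Fin n) ℝ) : Mat n) = 1) :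
    lamMinus G v = lamMinus G (act ((k : GL (Fin n) ℝ) : Mat n) v) := by
  have hkT : (↑k⁻¹ : Mat n) = (k : Mat n)ᵀ := by
    rw [Matrix.coe_units_inv, Matrix.inv_eq_left_inv hkO]
  exact congrArg sInf (unitLambdaSet_act hk hkT v).symm

/-- Let G be a closed, connected, self-adjoint, noncompact subgroup of GL(n,ℝ)
and v ∈ ℝⁿ nonzero. Then λ⁻(v) = λ⁻(k(v)) for every k ∈ K = G ∩ O(n,ℝ). -/
theorem stmt9 {n : ℕ} (G : Subgroup (GL (Fin n) ℝ))
    (hclosed : IsClosed (G : Set (GL (Fin n) ℝ)))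
    (hconn : IsConnected (G : Set (GL (Fin n) ℝ)))
    (hsa : IsSelfAdjointSubgroup G)
    (hnc : ¬ IsCompact (G : Set (GL (Fin n) ℝ)))
    (v : Euc n) (hv : v ≠ 0)
    (k : GL (Fin n) ℝ) (hk : k ∈ G)
    (hkO : ((k : GL (Fin n) ℝ) : Mat n)ᵀ * ((k : GL (Fin n) ℝ) : Mat n) = 1) :
    lamMinus G v = lamMinus G (act ((k : GL (Fin n) ℝ) : Mat n) v) :=
  stmt9_general G v k hk hkO

end
end
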